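/- For any two permutations r, s of {1,...,n}, Σ_{i=1}^n (r(i) − s(i))² ≤ n(n²−1)/3, with equality when s(i) = n + 1 − r(i) for all i. -/

import Mathlib

/-!
Relabelling by `r` turns the sum into `∑ (i - σ i)²` with `σ = s ∘ r⁻¹`, which equals
`2 ∑ i² - 2 ∑ i σ(i)`. By the rearrangement inequality this is largest when `σ` reverses the order,
`σ i = n + 1 - i`, and then it is `∑ (2i - n - 1)² = n(n² - 1)/3`.
-/

open Finset

section Rearrangement

variable {ι R : Type*} [Fintype ι]

theorem Equiv.Perm.sum_sub_comp_sq [CommRing R] (f : ι → R) (σ : Equiv.Perm ι) :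
    ∑ i, (f i - f (σ i)) ^ 2 = 2 * (∑ i, f i ^ 2 - ∑ i, f i * f (σ i)) := by
  have hσ : ∑ i, f (σ i) ^ 2 = ∑ i, f i ^ 2 := Equiv.sum_comp σ (f · ^ 2)
  simp only [sub_sq, sum_add_distrib, sum_sub_distrib, hσ, mul_assoc, ← mul_sum]
  ring

theorem Antivary.sum_sub_comp_sq_le [CommRing R] [LinearOrder R] [IsStrictOrderedRing R]
    {f : ι → R} {τ : Equiv.Perm ι} (hτ : Antivary f (f ∘ τ)) (σ : Equiv.Perm ι) :
    ∑ i, (f i - f (σ i)) ^ 2 ≤ ∑ i, (f i - f (τ i)) ^ 2 := by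
  have h := hτ.sum_mul_le_sum_mul_comp_perm (σ := σ.trans τ.symm)
  simp only [Function.comp_apply, Equiv.trans_apply, Equiv.apply_symm_apply] at h
  rw [σ.sum_sub_comp_sq, τ.sum_sub_comp_sq]
  linarith

end Rearrangement

theorem sum_range_two_mul_add_one_sub_sq (n : ℕ) (c : ℝ) :
    ∑ j ∈ range n, (2 * (j : ℝ) + 1 - c) ^ 2
      = 2 * n * (n - 1) * (2 * n - 1) / 3 + 2 * (1 - c) * n * (n - 1) + n * (1 - c) ^ 2 := by
  induction n with
  | zero => simp
  | succ m ih => rw [sum_range_succ, ih]; push_cast; ring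

namespace Fin

theorem antivary_val_val_rev (n : ℕ) :
    Antivary (fun i : Fin n => (i : ℝ)) (fun i => (i.rev : ℝ)) :=
  Monotone.antivary (fun _ _ h => by exact_mod_cast h)
    (fun _ _ h => by exact_mod_cast rev_anti h)

theorem cast_val_rev {n : ℕ} (i : Fin n) : ((i.rev : ℕ) : ℝ) = n - 1 - i := by
  rw [val_rev, Nat.cast_sub (by omega)]
  push_cast
  ring

theorem sum_val_sub_val_rev_sq (n : ℕ) :
    ∑ i : Fin n, ((i : ℝ) - i.rev) ^ 2 = n * ((n : ℝ) ^ 2 - 1) / 3 := by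
  have h (i : Fin n) : ((i : ℝ) - i.rev) ^ 2 = (2 * (i : ℝ) + 1 - n) ^ 2 := by
    rw [cast_val_rev]
    ring
  simp only [h]
  rw [sum_univ_eq_sum_range (fun j => (2 * (j : ℝ) + 1 - n) ^ 2),
    sum_range_two_mul_add_one_sub_sq]
  ring

end Fin

/-- For any two permutations `r, s` of `{1, ..., n}` (represented on `Fin n` with
values `r(i)+1, s(i)+1 ∈ {1,...,n}`), `Σ (r(i) − s(i))² ≤ n(n²−1)/3`, with equality
when `s(i) = n + 1 − r(i)` for all `i`. -/
theorem sum_sq_rank_diff_le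
    {n : ℕ} (r s : Equiv.Perm (Fin n)) :
    (∑ i, ((((r i : ℕ) : ℝ) + 1) - (((s i : ℕ) : ℝ) + 1)) ^ 2
        ≤ n * ((n : ℝ) ^ 2 - 1) / 3) ∧
    ((∀ i, (((s i : ℕ) : ℝ) + 1) = (n : ℝ) + 1 - (((r i : ℕ) : ℝ) + 1)) →
      ∑ i, ((((r i : ℕ) : ℝ) + 1) - (((s i : ℕ) : ℝ) + 1)) ^ 2
        = n * ((n : ℝ) ^ 2 - 1) / 3) := by
  simp only [add_sub_add_right_eq_sub]
  rw [← Fin.sum_val_sub_val_rev_sq n]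
  constructor
  · have hrank :
        ∑ i, ((r i : ℝ) - s i) ^ 2 = ∑ i : Fin n, ((i : ℝ) - (r.symm.trans s) i) ^ 2 := by
      rw [← Equiv.sum_comp r (fun i : Fin n => ((i : ℝ) - (r.symm.trans s) i) ^ 2)]
      simp
    rw [hrank]
    exact (Fin.antivary_val_val_rev n).sum_sub_comp_sq_le (τ := Fin.revPerm) _
  · intro hs
    have hrev (i : Fin n) : (s i : ℝ) = ((r i).rev : ℝ) := by
      rw [Fin.cast_val_rev]
      linarith [hs i]
    simp only [hrev]
    exact Equiv.sum_comp r (fun i : Fin n => ((i : ℝ) - i.rev) ^ 2)
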